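/- Let (𝔉,𝒱)_E be an (𝔉,𝒱)_E-structure, let 𝔉* ⊆ 𝔉, and let T be any term. Then N(R_{I(𝔉*∧E)}(T)) ⊆ N(𝔉*) ∪ N(T), i.e., every variable set V ∈ 𝒱 meeting a variable of the reduced polynomial R_{I(𝔉*∧E)}(T) already meets a variable of some formula in 𝔉* or of T. -/

import Mathlib

attribute [local instance] Classical.propDecidable

/-- A literal is a variable together with a polarity (`true` = positive). -/
abbrev Clause (σ : Type) := Finset (σ × Bool)

/-- A CNF formula is a finite set of clauses. -/
abbrev CNF (σ : Type) := Finset (Clause σ)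

/-- The variables occurring in a clause. -/
def clauseVars {σ : Type} [DecidableEq σ] (C : Clause σ) : Finset σ := C.image Prod.fst

/-- The variables occurring in a CNF formula. -/
def cnfVars {σ : Type} [DecidableEq σ] (φ : CNF σ) : Finset σ := φ.sup clauseVars

/-- A (total) assignment satisfies a literal. -/
def litSat {σ : Type} (α : σ → Bool) (l : σ × Bool) : Prop := α l.1 = l.2

/-- A (total) assignment satisfies a clause. -/
def clauseSat {σ : Type} (α : σ → Bool) (C : Clause σ) : Prop := ∃ l ∈ C, litSat α l

/-- A (total) assignment satisfies a CNF formula. -/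
def cnfSat {σ : Type} (α : σ → Bool) (φ : CNF σ) : Prop := ∀ C ∈ φ, clauseSat α C

/-- Multilinearization: replace every exponent by its minimum with `1`. -/
noncomputable def mlin {σ 𝔽 : Type} [CommRing 𝔽] (p : MvPolynomial σ 𝔽) :
    MvPolynomial σ 𝔽 :=
  ∑ m ∈ p.support,
    MvPolynomial.monomial (Finsupp.mapRange (fun e => min e 1) (by simp) m) (p.coeff m)

/-- The polynomial translation of a clause: identifying true with `0`, the clause
`⋁_{x∈L⁺} x ∨ ⋁_{y∈L⁻} ¬y` becomes `∏_{x∈L⁺} x · ∏_{y∈L⁻} (1 - y)`. -/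
noncomputable def clausePoly {σ : Type} (𝔽 : Type) [CommRing 𝔽] (C : Clause σ) :
    MvPolynomial σ 𝔽 :=
  ∏ l ∈ C, if l.2 then MvPolynomial.X l.1 else 1 - MvPolynomial.X l.1
/-- An admissible total order on multilinear monomials (identified with finite sets of
variables): a strict linear order in which lower-degree monomials come first and which is
compatible with multiplication by monomials on disjoint sets of variables. -/
structure AdmissibleOrder (σ : Type) [DecidableEq σ] where
  lt : Finset σ → Finset σ → Prop
  irrefl : ∀ S, ¬ lt S S
  trans : ∀ {S T U : Finset σ}, lt S T → lt T U → lt S U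
  total : ∀ S T, S ≠ T → lt S T ∨ lt T S
  degree_lt : ∀ S T : Finset σ, S.card < T.card → lt S T
  mul_lt : ∀ S T m : Finset σ, lt S T → Disjoint m (S ∪ T) → lt (m ∪ S) (m ∪ T)

/-- `T` is the leading term of `Q` with respect to the admissible order `ord`. -/
def IsLeadTerm {σ 𝔽 : Type} [DecidableEq σ] [CommRing 𝔽] (ord : AdmissibleOrder σ)
    (Q T : MvPolynomial σ 𝔽) : Prop :=
  ∃ m ∈ Q.support, T = MvPolynomial.monomial m (Q.coeff m) ∧
    ∀ m' ∈ Q.support, m' ≠ m → ord.lt m'.support m.support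

/-- A term `T` is reducible modulo a set `I` of polynomials if `T` is the leading term of
some member of `I`. -/
def Reducible {σ 𝔽 : Type} [DecidableEq σ] [CommRing 𝔽] (ord : AdmissibleOrder σ)
    (I : Set (MvPolynomial σ 𝔽)) (T : MvPolynomial σ 𝔽) : Prop :=
  ∃ Q ∈ I, IsLeadTerm ord Q T

/-- `R` is the reduction of `P` modulo `I`: `R` is multilinear, `P - R ∈ I`, and every term
of `R` is irreducible modulo `I`. -/
def IsReduction {σ 𝔽 : Type} [DecidableEq σ] [CommRing 𝔽] (ord : AdmissibleOrder σ)
    (I : Set (MvPolynomial σ 𝔽)) (P R : MvPolynomial σ 𝔽) : Prop :=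
  mlin R = R ∧ P - R ∈ I ∧
    ∀ m ∈ R.support, ¬ Reducible ord I (MvPolynomial.monomial m (R.coeff m))

/-- The reduction operator `R_I` modulo `I` (well defined on multilinear polynomials when
`I` is an ideal of the multilinear ring). -/
noncomputable def redOp {σ 𝔽 : Type} [DecidableEq σ] [CommRing 𝔽] (ord : AdmissibleOrder σ)
    (I : Set (MvPolynomial σ 𝔽)) (P : MvPolynomial σ 𝔽) : MvPolynomial σ 𝔽 :=
  if h : ∃ R, IsReduction ord I P R then h.choose else 0

/-- A subset of the multilinear polynomial ring is an ideal of that ring: it consists of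
multilinear polynomials, contains `0`, and is closed under addition and under multiplication
(followed by multilinearization) by arbitrary polynomials. -/
def IsMLIdeal {σ 𝔽 : Type} [CommRing 𝔽] (I : Set (MvPolynomial σ 𝔽)) : Prop :=
  0 ∈ I ∧ (∀ p ∈ I, mlin p = p) ∧ (∀ p ∈ I, ∀ q ∈ I, p + q ∈ I) ∧
    (∀ p ∈ I, ∀ q : MvPolynomial σ 𝔽, mlin (q * p) ∈ I)

/-- The multilinear (squarefree) monomial with support `m`. -/
noncomputable def monoOf {σ : Type} [DecidableEq σ] (m : Finset σ) : σ →₀ ℕ :=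
  ∑ x ∈ m, Finsupp.single x 1
/-- A partial assignment with domain `D` and values `α` respects the CNF formula `E`:
every clause of `E` sharing a variable with `D` is satisfied by the assignment (via a
literal whose variable lies in `D`). -/
def Respects {σ : Type} [DecidableEq σ] (D : Finset σ) (α : σ → Bool) (E : CNF σ) : Prop :=
  ∀ C ∈ E, (clauseVars C ∩ D).Nonempty → ∃ l ∈ C, l.1 ∈ D ∧ α l.1 = l.2

/-- A variable set `V` respects `E` if some assignment with domain `V` respects `E`. -/
def VRespects {σ : Type} [DecidableEq σ] (V : Finset σ) (E : CNF σ) : Prop :=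
  ∃ α : σ → Bool, Respects V α E

/-- The formula `F` is respectfully satisfiable by the variable set `V` (with respect to
`E`): some assignment with domain `V` satisfies `F` and respects `E`. -/
def RSat {σ : Type} [DecidableEq σ] (E F : CNF σ) (V : Finset σ) : Prop :=
  ∃ α : σ → Bool, Respects V α E ∧ ∀ C ∈ F, ∃ l ∈ C, l.1 ∈ V ∧ α l.1 = l.2

/-- An `(𝔉,𝒱)_E`-structure: a CNF formula `Ecnf`, a family `fam` of CNF formulas, and a
family `vfam` of variable sets, each respecting `Ecnf`. -/
structure FVStructure (σ : Type) [DecidableEq σ] where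
  Ecnf : CNF σ
  fam : Finset (CNF σ)
  vfam : Finset (Finset σ)
  vfam_respects : ∀ V ∈ vfam, VRespects V Ecnf

/-- `F` and `V` are neighbours: they share a variable. -/
def Nbr {σ : Type} [DecidableEq σ] (F : CNF σ) (V : Finset σ) : Prop :=
  (cnfVars F ∩ V).Nonempty

/-- `F` and `V` are respectful neighbours. -/
def RNbr {σ : Type} [DecidableEq σ] (E F : CNF σ) (V : Finset σ) : Prop :=
  Nbr F V ∧ RSat E F V

/-- The respectful boundary of a subfamily `𝔛 ⊆ fam`: all `V ∈ vfam` that are a respectful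
neighbour of some `F ∈ 𝔛` and not a neighbour of any other member of `𝔛`. -/
noncomputable def rbdry {σ : Type} [DecidableEq σ] (S : FVStructure σ)
    (𝔛 : Finset (CNF σ)) : Finset (Finset σ) :=
  S.vfam.filter fun V =>
    ∃ F ∈ 𝔛, RNbr S.Ecnf F V ∧ ∀ F' ∈ 𝔛, F' ≠ F → ¬ Nbr F' V

/-- A respectful `(s,δ,ξ)`-boundary expander. -/
def IsRBExpander {σ : Type} [DecidableEq σ] (S : FVStructure σ) (s : ℕ) (δ ξ : ℝ) : Prop :=
  ∀ 𝔛 ⊆ S.fam, 𝔛.card ≤ s → δ * (𝔛.card : ℝ) - ξ ≤ ((rbdry S 𝔛).card : ℝ)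

/-- `𝔛` is `(s,𝒱')`-contained: `𝔛 ⊆ fam`, `|𝔛| ≤ s` and `∂(𝔛) ⊆ 𝒱'`. -/
def Contained {σ : Type} [DecidableEq σ] (S : FVStructure σ) (s : ℕ)
    (𝒱' : Finset (Finset σ)) (𝔛 : Finset (CNF σ)) : Prop :=
  𝔛 ⊆ S.fam ∧ 𝔛.card ≤ s ∧ rbdry S 𝔛 ⊆ 𝒱'

/-- The `s`-support of `𝒱'`: the union of all `(s,𝒱')`-contained subsets of `fam`. -/
noncomputable def suppV {σ : Type} [DecidableEq σ] (S : FVStructure σ) (s : ℕ)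
    (𝒱' : Finset (Finset σ)) : Finset (CNF σ) :=
  S.fam.filter fun F => ∃ 𝔛, Contained S s 𝒱' 𝔛 ∧ F ∈ 𝔛

/-- The overlap of a family of variable sets: the maximum number of sets that contain any
single variable. -/
noncomputable def overlap {σ : Type} [Fintype σ] [DecidableEq σ]
    (𝒱 : Finset (Finset σ)) : ℕ :=
  Finset.univ.sup fun x : σ => (𝒱.filter fun V => x ∈ V).card

/-- The neighbourhood `N(T)` of a (multilinear) monomial `m`: all `V ∈ vfam` meeting it. -/
noncomputable def nbrsM {σ : Type} [DecidableEq σ] (S : FVStructure σ) (m : Finset σ) :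
    Finset (Finset σ) :=
  S.vfam.filter fun V => (m ∩ V).Nonempty

/-- The neighbourhood of a subfamily `𝔛 ⊆ fam`. -/
noncomputable def nbrsF {σ : Type} [DecidableEq σ] (S : FVStructure σ)
    (𝔛 : Finset (CNF σ)) : Finset (Finset σ) :=
  S.vfam.filter fun V => ∃ F ∈ 𝔛, (cnfVars F ∩ V).Nonempty

/-- The `s`-support `Sup_s(T)` of a term with monomial `m`, i.e. `Sup_s(N(T))`. -/
noncomputable def suppM {σ : Type} [DecidableEq σ] (S : FVStructure σ) (s : ℕ)
    (m : Finset σ) : Finset (CNF σ) :=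
  suppV S s (nbrsM S m)

/-- All clauses of the CNF formula `𝔛 ∧ E`. -/
noncomputable def clausesOf {σ : Type} [DecidableEq σ] (S : FVStructure σ)
    (𝔛 : Finset (CNF σ)) : CNF σ :=
  𝔛.sup id ∪ S.Ecnf
/-- The ideal `I(𝔛 ∧ E)` of the multilinear ring generated by the polynomial translations
of all clauses of the formulas in `𝔛` together with all clauses of `E`. -/
def idealOf {σ : Type} (𝔽 : Type) [Field 𝔽] [DecidableEq σ] (S : FVStructure σ)
    (𝔛 : Finset (CNF σ)) : Set (MvPolynomial σ 𝔽) :=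
  { P | ∃ q : Clause σ → MvPolynomial σ 𝔽,
      P = mlin (∑ C ∈ clausesOf S 𝔛, q C * clausePoly 𝔽 C) }

/-- The neighbourhood `N(P)` of a polynomial: all `V ∈ vfam` meeting a variable of `P`. -/
noncomputable def nbrsP {σ 𝔽 : Type} [DecidableEq σ] [CommRing 𝔽] (S : FVStructure σ)
    (P : MvPolynomial σ 𝔽) : Finset (Finset σ) :=
  S.vfam.filter fun V => (P.vars ∩ V).Nonempty


/-! If `V ∈ 𝒱` meets neither `𝔉*` nor `T`, choose an assignment `α` on `V` respecting `E` and
substitute it into the reduction `R` of `T`. A generator clause either avoids `V` and is left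
unchanged, or is a clause of `E` satisfied by `α` and becomes `0`; `T` is left unchanged too. Hence
the multilinearised substitution `R'` of `R` still satisfies `T - R' ∈ I`. Every monomial of `R'`
divides one of `R`, so a leading monomial of `0 ≠ R - R' ∈ I` would make a term of `R` reducible.
Thus `R' = R`, and `R` has no variable in `V`. -/

open MvPolynomial Finset

section Multilinearization

variable {R σ : Type} [CommRing R]

noncomputable def truncOne (e : σ →₀ ℕ) : σ →₀ ℕ :=
  Finsupp.mapRange (fun k => min k 1) (by simp) e

theorem truncOne_le_one (e : σ →₀ ℕ) (x : σ) : truncOne e x ≤ 1 :=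
  min_le_right _ _

theorem support_truncOne (e : σ →₀ ℕ) : (truncOne e).support = e.support := by
  ext x
  simp only [truncOne, Finsupp.mem_support_iff, Finsupp.mapRange_apply]
  omega

theorem Finsupp.eq_of_support_eq_of_le_one {e e' : σ →₀ ℕ} (he : ∀ x, e x ≤ 1)
    (he' : ∀ x, e' x ≤ 1) (h : e.support = e'.support) : e = e' := by
  ext x
  have hx := Finset.ext_iff.mp h x
  simp only [Finsupp.mem_support_iff] at hx
  have := he x
  have := he' x
  omega

theorem mlin_eq_sum (p : MvPolynomial σ R) :
    mlin p = ∑ e ∈ p.support, monomial (truncOne e) (p.coeff e) := rfl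

theorem monomial_mem_restrictDegree_one {e : σ →₀ ℕ} (he : ∀ x, e x ≤ 1) (c : R) :
    monomial e c ∈ restrictDegree σ R 1 := by
  rw [mem_restrictDegree]
  intro e' he'
  rw [mem_singleton.mp (support_monomial_subset he')]
  exact he

theorem mlin_mem_restrictDegree (p : MvPolynomial σ R) : mlin p ∈ restrictDegree σ R 1 :=
  Submodule.sum_mem _ fun e _ => monomial_mem_restrictDegree_one (truncOne_le_one e) _

theorem support_mlin_subset [DecidableEq σ] (p : MvPolynomial σ R) :
    (mlin p).support ⊆ p.support.image truncOne := by
  intro e he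
  obtain ⟨e', he', hee'⟩ := mem_biUnion.mp (support_sum he)
  exact mem_image.mpr ⟨e', he', (mem_singleton.mp (support_monomial_subset hee')).symm⟩

def IsBoolean (z : σ → R) : Prop := ∀ x, z x = 0 ∨ z x = 1

theorem IsBoolean.pow_eq {z : σ → R} (hz : IsBoolean z) (x : σ) {n : ℕ} (hn : n ≠ 0) :
    z x ^ n = z x := by
  rcases hz x with h | h <;> simp [h, hn]

theorem eval_monomial_truncOne {z : σ → R} (hz : IsBoolean z) (e : σ →₀ ℕ) (c : R) :
    eval z (monomial (truncOne e) c) = eval z (monomial e c) := by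
  simp only [eval_monomial, Finsupp.prod, support_truncOne]
  congr 1
  refine prod_congr rfl fun x hx => ?_
  rw [hz.pow_eq x (Finsupp.mem_support_iff.mp hx),
    hz.pow_eq x (Finsupp.mem_support_iff.mp (by rwa [support_truncOne]))]

theorem eval_mlin {z : σ → R} (hz : IsBoolean z) (p : MvPolynomial σ R) :
    eval z (mlin p) = eval z p := by
  conv_rhs => rw [p.as_sum]
  simp only [mlin_eq_sum, map_sum, eval_monomial_truncOne hz]

theorem eval_indicator_eq_coeff {p : MvPolynomial σ R} {e : σ →₀ ℕ} (he : e ∈ p.support)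
    (hmin : ∀ e' ∈ p.support, e'.support ⊆ e.support → e' = e) :
    eval (fun x => if x ∈ e.support then 1 else 0) p = p.coeff e := by
  rw [eval_eq, sum_eq_single e]
  · rw [prod_eq_one fun x hx => by simp [hx], mul_one]
  · intro e' he' hne
    obtain ⟨x, hx, hxe⟩ := not_subset.mp fun h => hne (hmin e' he' h)
    rw [prod_eq_zero hx (by simp [hxe, Finsupp.mem_support_iff.mp hx]), mul_zero]
  · exact fun h => absurd he h

theorem eq_zero_of_eval_isBoolean {p : MvPolynomial σ R} (hp : p ∈ restrictDegree σ R 1)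
    (h : ∀ z, IsBoolean z → eval z p = 0) : p = 0 := by
  by_contra hne
  -- at the indicator of a support-minimal exponent `e`, only the term of `e` survives
  obtain ⟨e, he, hmin⟩ := exists_min_image p.support (fun e => e.support.card)
    (support_nonempty.mpr hne)
  rw [mem_restrictDegree] at hp
  have hminimal : ∀ e' ∈ p.support, e'.support ⊆ e.support → e' = e := fun e' he' hsub =>
    Finsupp.eq_of_support_eq_of_le_one (hp e' he') (hp e he)
      (eq_of_subset_of_card_le hsub (hmin e' he'))
  have := h (fun x => if x ∈ e.support then 1 else 0) fun x => by
    by_cases hx : x ∈ e.support <;> simp [hx]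
  rw [eval_indicator_eq_coeff he hminimal] at this
  exact mem_support_iff.mp he this

theorem eq_of_eval_isBoolean {p q : MvPolynomial σ R} (hp : p ∈ restrictDegree σ R 1)
    (hq : q ∈ restrictDegree σ R 1) (h : ∀ z, IsBoolean z → eval z p = eval z q) : p = q :=
  sub_eq_zero.mp <| eq_zero_of_eval_isBoolean (Submodule.sub_mem _ hp hq) fun z hz => by
    rw [map_sub, h z hz, sub_self]

theorem mlin_eq_self {p : MvPolynomial σ R} (hp : p ∈ restrictDegree σ R 1) : mlin p = p :=
  eq_of_eval_isBoolean (mlin_mem_restrictDegree p) hp fun _ hz => eval_mlin hz p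

theorem mlin_add (p q : MvPolynomial σ R) : mlin (p + q) = mlin p + mlin q :=
  eq_of_eval_isBoolean (mlin_mem_restrictDegree _)
    (Submodule.add_mem _ (mlin_mem_restrictDegree p) (mlin_mem_restrictDegree q))
    fun _ hz => by simp only [map_add, eval_mlin hz]

theorem mlin_sub (p q : MvPolynomial σ R) : mlin (p - q) = mlin p - mlin q :=
  eq_of_eval_isBoolean (mlin_mem_restrictDegree _)
    (Submodule.sub_mem _ (mlin_mem_restrictDegree p) (mlin_mem_restrictDegree q))
    fun _ hz => by simp only [map_sub, eval_mlin hz]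

theorem mlin_mul_mlin (p q : MvPolynomial σ R) : mlin (q * mlin p) = mlin (q * p) :=
  eq_of_eval_isBoolean (mlin_mem_restrictDegree _) (mlin_mem_restrictDegree _)
    fun _ hz => by simp only [map_mul, eval_mlin hz]

theorem mlin_monomial_mul (e : σ →₀ ℕ) (c : R) (p : MvPolynomial σ R) :
    mlin (monomial e c * p) =
      ∑ e' ∈ p.support, monomial (truncOne (e + e')) (c * p.coeff e') :=
  eq_of_eval_isBoolean (mlin_mem_restrictDegree _)
    (Submodule.sum_mem _ fun _ _ => monomial_mem_restrictDegree_one (truncOne_le_one _) _)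
    fun _ hz => by
      conv_lhs => rw [p.as_sum]
      simp only [eval_mlin hz, mul_sum, monomial_mul, map_sum, eval_monomial_truncOne hz]

end Multilinearization

theorem IsMLIdeal.mem_restrictDegree {R σ : Type} [CommRing R] {I : Set (MvPolynomial σ R)}
    (hI : IsMLIdeal I) {p : MvPolynomial σ R} (hp : p ∈ I) : p ∈ restrictDegree σ R 1 :=
  hI.2.1 p hp ▸ mlin_mem_restrictDegree p

theorem IsMLIdeal.sub_mem {R σ : Type} [CommRing R] {I : Set (MvPolynomial σ R)}
    (hI : IsMLIdeal I) {p q : MvPolynomial σ R} (hp : p ∈ I) (hq : q ∈ I) : p - q ∈ I := by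
  have hneg : mlin (-1 * q) = -q := by
    rw [neg_one_mul, mlin_eq_self (Submodule.neg_mem _ (hI.mem_restrictDegree hq))]
  obtain ⟨-, -, hadd, hmul⟩ := hI
  have := hadd p hp _ (hmul q hq (-1))
  rwa [hneg, ← sub_eq_add_neg] at this

namespace AdmissibleOrder

variable {σ : Type} [DecidableEq σ] (ord : AdmissibleOrder σ)

theorem lt_asymm {S T : Finset σ} (h : ord.lt S T) : ¬ ord.lt T S :=
  fun h' => ord.irrefl S (ord.trans h h')

theorem ne_of_lt {S T : Finset σ} (h : ord.lt S T) : S ≠ T :=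
  fun hST => ord.irrefl S (hST ▸ h)

theorem card_le_of_lt {S T : Finset σ} (h : ord.lt S T) : S.card ≤ T.card :=
  le_of_not_gt fun hc => ord.lt_asymm h (ord.degree_lt T S hc)

/-- When `d` meets `S`, the union `d ∪ S` has smaller degree than `d ∪ T`. -/
theorem union_lt_union {S T d : Finset σ} (h : ord.lt S T) (hd : Disjoint d T) :
    ord.lt (d ∪ S) (d ∪ T) := by
  by_cases hdS : Disjoint d S
  · exact ord.mul_lt S T d h (disjoint_union_right.mpr ⟨hdS, hd⟩)
  · apply ord.degree_lt
    have := card_union_add_card_inter d S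
    have := card_union_of_disjoint hd
    have := ord.card_le_of_lt h
    have : (d ∩ S).card ≠ 0 := fun h0 =>
      hdS (disjoint_iff_inter_eq_empty.mpr (card_eq_zero.mp h0))
    omega

theorem exists_greatest (t : Finset (Finset σ)) (ht : t.Nonempty) :
    ∃ M ∈ t, ∀ S ∈ t, S ≠ M → ord.lt S M := by
  induction ht using Finset.Nonempty.cons_induction with
  | singleton a => exact ⟨a, mem_singleton_self a, fun S hS hne => absurd (mem_singleton.mp hS) hne⟩
  | cons a t ha ht ih =>
    obtain ⟨M, hM, hmax⟩ := ih
    have haM : a ≠ M := fun h => ha (h ▸ hM)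
    rcases ord.total a M haM with haM' | hMa
    · refine ⟨M, mem_cons_of_mem hM, fun S hS hne => ?_⟩
      rcases mem_cons.mp hS with rfl | hS
      exacts [haM', hmax S hS hne]
    · refine ⟨a, mem_cons_self a t, fun S hS hne => ?_⟩
      rcases mem_cons.mp hS with rfl | hS
      · exact absurd rfl hne
      by_cases hSM : S = M
      · exact hSM ▸ hMa
      · exact ord.trans (hmax S hS hSM) hMa

end AdmissibleOrder

theorem monoOf_apply {σ : Type} [DecidableEq σ] (m : Finset σ) (x : σ) :
    monoOf m x = if x ∈ m then 1 else 0 := by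
  simp [monoOf, Finsupp.finsetSum_apply, Finsupp.single_apply]

theorem support_monoOf {σ : Type} [DecidableEq σ] (m : Finset σ) : (monoOf m).support = m := by
  ext x
  by_cases hx : x ∈ m <;> simp [monoOf_apply, hx]

theorem vars_monomial_subset {R σ : Type} [CommRing R] (e : σ →₀ ℕ) (c : R) :
    (monomial e c).vars ⊆ e.support := fun x hx => by
  obtain ⟨d, hd, hxd⟩ := (mem_vars_iff_mem_support x).mp hx
  rwa [mem_singleton.mp (support_monomial_subset hd)] at hxd

section LeadingTerms

variable {R σ : Type} [CommRing R] [DecidableEq σ] (ord : AdmissibleOrder σ)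

theorem exists_isLeadTerm {p : MvPolynomial σ R} (hp : p ∈ restrictDegree σ R 1) (h0 : p ≠ 0) :
    ∃ m ∈ p.support, IsLeadTerm ord p (monomial m (p.coeff m)) := by
  rw [mem_restrictDegree] at hp
  obtain ⟨M, hM, hmax⟩ := ord.exists_greatest (p.support.image Finsupp.support)
    ((support_nonempty.mpr h0).image _)
  obtain ⟨m, hm, rfl⟩ := mem_image.mp hM
  refine ⟨m, hm, m, hm, rfl, fun m' hm' hne => hmax _ (mem_image_of_mem _ hm') fun h => hne ?_⟩
  exact Finsupp.eq_of_support_eq_of_le_one (hp m' hm') (hp m hm) h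

theorem isLeadTerm_sum_monomial {ι : Type} {s : Finset ι} {f : ι → σ →₀ ℕ} {c : ι → R} {i₀ : ι}
    (hi₀ : i₀ ∈ s) (hc : c i₀ ≠ 0)
    (hlt : ∀ i ∈ s, i ≠ i₀ → ord.lt (f i).support (f i₀).support) :
    IsLeadTerm ord (∑ i ∈ s, monomial (f i) (c i)) (monomial (f i₀) (c i₀)) := by
  have hne : ∀ i ∈ s, i ≠ i₀ → f i ≠ f i₀ := fun i hi hii₀ h =>
    ord.ne_of_lt (hlt i hi hii₀) (congrArg Finsupp.support h)
  have hcoeff : (∑ i ∈ s, monomial (f i) (c i)).coeff (f i₀) = c i₀ := by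
    rw [coeff_sum, sum_eq_single i₀
      (fun i hi hii₀ => by rw [coeff_monomial, if_neg (hne i hi hii₀)]) (fun h => absurd hi₀ h),
      coeff_monomial, if_pos rfl]
  refine ⟨f i₀, mem_support_iff.mpr (hcoeff ▸ hc), by rw [hcoeff], fun m hm hmi₀ => ?_⟩
  obtain ⟨i, hi, hmi⟩ := mem_biUnion.mp (support_sum hm)
  rw [mem_singleton.mp (support_monomial_subset hmi)] at hmi₀ ⊢
  exact hlt i hi fun h => hmi₀ (h ▸ rfl)

end LeadingTerms

section Reduction

variable {𝔽 σ : Type} [Field 𝔽] [DecidableEq σ] (ord : AdmissibleOrder σ)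

/-- Multiply the witness for `x^m₀` by `x^(e \ m₀)`: by `union_lt_union` its leading term stays
leading. -/
theorem IsMLIdeal.reducible_of_support_subset {I : Set (MvPolynomial σ 𝔽)} (hI : IsMLIdeal I)
    {m₀ e : σ →₀ ℕ} {c₀ c : 𝔽} (h : Reducible ord I (monomial m₀ c₀)) (hc₀ : c₀ ≠ 0)
    (he : ∀ x, e x ≤ 1) (hsub : m₀.support ⊆ e.support) (hc : c ≠ 0) :
    Reducible ord I (monomial e c) := by
  obtain ⟨Q, hQ, m, hm, hT, hlead⟩ := h
  obtain ⟨rfl, rfl⟩ : m₀ = m ∧ c₀ = Q.coeff m := by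
    simpa [monomial_eq_monomial_iff, hc₀] using hT
  set d := e.support \ m₀.support
  have hsupp : ∀ e₁ : σ →₀ ℕ, (truncOne (monoOf d + e₁)).support = d ∪ e₁.support := fun e₁ => by
    rw [support_truncOne, Finsupp.support_add_eq_union, support_monoOf]
  have hfm₀ : truncOne (monoOf d + m₀) = e :=
    Finsupp.eq_of_support_eq_of_le_one (truncOne_le_one _) he
      (by rw [hsupp, sdiff_union_of_subset hsub])
  have hlead' := isLeadTerm_sum_monomial ord (f := fun e₁ => truncOne (monoOf d + e₁))
    (c := fun e₁ => c / Q.coeff m₀ * Q.coeff e₁) hm (by simp [hc, hc₀])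
    fun e₁ he₁ hne => by
      simp only [hsupp]
      exact ord.union_lt_union (hlead e₁ he₁ hne) sdiff_disjoint
  obtain ⟨-, -, -, hmul⟩ := hI
  refine ⟨_, hmul Q hQ (monomial (monoOf d) (c / Q.coeff m₀)), ?_⟩
  rw [mlin_monomial_mul]
  simpa [hfm₀, div_mul_cancel₀ c hc₀] using hlead'

theorem IsReduction.eq_of_sub_mem {I : Set (MvPolynomial σ 𝔽)} (hI : IsMLIdeal I)
    {P R R' : MvPolynomial σ 𝔽} (hR : IsReduction ord I P R)
    (hPR' : P - R' ∈ I) (hcov : ∀ e' ∈ R'.support, ∃ e ∈ R.support, e'.support ⊆ e.support) :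
    R' = R := by
  obtain ⟨hRml, hPR, hirr⟩ := hR
  have hRdeg := hRml ▸ mlin_mem_restrictDegree R
  rw [mem_restrictDegree] at hRdeg
  have hD : R - R' ∈ I := by simpa using hI.sub_mem hPR' hPR
  by_contra hne
  obtain ⟨m₀, hm₀, hlead⟩ :=
    exists_isLeadTerm ord (hI.mem_restrictDegree hD) (sub_ne_zero.mpr (Ne.symm hne))
  obtain ⟨e, he, hsub⟩ : ∃ e ∈ R.support, m₀.support ⊆ e.support := by
    rcases mem_union.mp (support_sub σ R R' hm₀) with h | h
    exacts [⟨m₀, h, subset_rfl⟩, hcov m₀ h]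
  exact hirr e he (hI.reducible_of_support_subset ord ⟨_, hD, hlead⟩ (mem_support_iff.mp hm₀)
    (hRdeg e he) hsub (mem_support_iff.mp he))

end Reduction

section PartialSubstitution

variable {R σ : Type} [CommRing R] [DecidableEq σ]

def truthVal (α : σ → Bool) (x : σ) : R := if α x then 0 else 1

noncomputable def partialSubst (V : Finset σ) (α : σ → Bool) :
    MvPolynomial σ R →ₐ[R] MvPolynomial σ R :=
  aeval fun x => if x ∈ V then C (truthVal α x) else X x

theorem eval_partialSubst (V : Finset σ) (α : σ → Bool) (z : σ → R) (p : MvPolynomial σ R) :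
    eval z (partialSubst V α p) = eval (V.piecewise (truthVal α) z) p := by
  change aeval z (aeval _ p) = aeval _ p
  rw [comp_aeval_apply]
  congr 2
  funext x
  by_cases hx : x ∈ V <;> simp [hx]

theorem IsBoolean.piecewise_truthVal {z : σ → R} (hz : IsBoolean z) (V : Finset σ)
    (α : σ → Bool) : IsBoolean (V.piecewise (truthVal α) z) := fun x => by
  by_cases hx : x ∈ V
  · cases h : α x <;> simp [hx, truthVal, h]
  · simpa [hx] using hz x

theorem mlin_partialSubst_mlin (V : Finset σ) (α : σ → Bool) (p : MvPolynomial σ R) :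
    mlin (partialSubst V α (mlin p)) = mlin (partialSubst V α p) :=
  eq_of_eval_isBoolean (mlin_mem_restrictDegree _) (mlin_mem_restrictDegree _) fun _ hz => by
    simp only [eval_mlin hz, eval_partialSubst, eval_mlin (hz.piecewise_truthVal V α)]

theorem partialSubst_eq_self {V : Finset σ} (α : σ → Bool) {p : MvPolynomial σ R}
    (h : Disjoint p.vars V) : partialSubst V α p = p := by
  refine hom_congr_vars (f₁ := (partialSubst V α).toRingHom) (f₂ := RingHom.id _)
    (by ext; simp) (fun x hx _ => ?_) rfl
  simp [partialSubst, disjoint_left.mp h hx]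

theorem vars_partialSubst_subset [Nontrivial R] (V : Finset σ) (α : σ → Bool)
    (p : MvPolynomial σ R) :
    (partialSubst V α p).vars ⊆ p.vars \ V := by
  refine (aeval_eq_bind₁ (R := R) _ ▸ vars_bind₁ _ p).trans (biUnion_subset.mpr fun x hx => ?_)
  by_cases hxV : x ∈ V
  · simp [hxV, vars_C]
  · simp [hxV, vars_X, hx]

theorem exists_of_mem_support_mlin_partialSubst [Nontrivial R] {V : Finset σ} {α : σ → Bool}
    {p : MvPolynomial σ R} {e' : σ →₀ ℕ} (he' : e' ∈ (mlin (partialSubst V α p)).support) :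
    ∃ e ∈ p.support, e'.support ⊆ e.support \ V := by
  obtain ⟨e'', he'', rfl⟩ := mem_image.mp (support_mlin_subset _ he')
  rw [p.as_sum, map_sum] at he''
  obtain ⟨e, he, he''e⟩ := mem_biUnion.mp (support_sum he'')
  refine ⟨e, he, fun x hx => ?_⟩
  rw [support_truncOne] at hx
  have hxvars := vars_partialSubst_subset V α _ ((mem_vars_iff_mem_support x).mpr ⟨e'', he''e, hx⟩)
  rwa [vars_monomial (mem_support_iff.mp he)] at hxvars

theorem partialSubst_clausePoly_eq_self {V : Finset σ} (α : σ → Bool) {C : Clause σ}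
    (h : Disjoint (clauseVars C) V) : partialSubst V α (clausePoly R C) = clausePoly R C := by
  rw [clausePoly, map_prod]
  refine prod_congr rfl fun l hl => ?_
  have hlV : l.1 ∉ V := disjoint_left.mp h (mem_image_of_mem _ hl)
  split_ifs <;> simp [partialSubst, hlV]

theorem partialSubst_clausePoly_eq_zero {V : Finset σ} {α : σ → Bool} {C : Clause σ}
    {l : σ × Bool} (hl : l ∈ C) (hlV : l.1 ∈ V) (hα : α l.1 = l.2) :
    partialSubst V α (clausePoly R C) = 0 := by
  rw [clausePoly, map_prod]
  exact prod_eq_zero hl (by cases h : l.2 <;> simp [partialSubst, truthVal, hlV, hα, h])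

end PartialSubstitution

section ClauseIdeal

variable {𝔽 σ : Type} [Field 𝔽] [DecidableEq σ] {S : FVStructure σ} {𝔛 : Finset (CNF σ)}

theorem isMLIdeal_idealOf (S : FVStructure σ) (𝔛 : Finset (CNF σ)) :
    IsMLIdeal (idealOf 𝔽 S 𝔛) := by
  refine ⟨⟨0, by simp [mlin_eq_sum]⟩, ?_, ?_, ?_⟩
  · rintro _ ⟨q, rfl⟩
    exact mlin_eq_self (mlin_mem_restrictDegree _)
  · rintro _ ⟨q, rfl⟩ _ ⟨q', rfl⟩
    exact ⟨q + q', by simp only [← mlin_add, ← sum_add_distrib, Pi.add_apply, add_mul]⟩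
  · rintro _ ⟨q, rfl⟩ r
    exact ⟨fun C => r * q C, by simp only [mlin_mul_mlin, mul_sum, mul_assoc]⟩

theorem mlin_partialSubst_mem_idealOf {V : Finset σ} {α : σ → Bool}
    (hgen : ∀ C ∈ clausesOf S 𝔛, partialSubst V α (clausePoly 𝔽 C) = clausePoly 𝔽 C ∨
      partialSubst V α (clausePoly 𝔽 C) = 0)
    {p : MvPolynomial σ 𝔽} (hp : p ∈ idealOf 𝔽 S 𝔛) :
    mlin (partialSubst V α p) ∈ idealOf 𝔽 S 𝔛 := by
  obtain ⟨q, rfl⟩ := hp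
  refine ⟨fun C => if partialSubst V α (clausePoly 𝔽 C) = clausePoly 𝔽 C then
    partialSubst V α (q C) else 0, ?_⟩
  rw [mlin_partialSubst_mlin, map_sum]
  congr 1
  refine sum_congr rfl fun C hC => ?_
  rw [map_mul]
  rcases hgen C hC with hfix | hkill
  · simp [hfix]
  · dsimp only
    split_ifs with hfix
    · rw [hfix]
    · rw [hkill, mul_zero, zero_mul]

theorem partialSubst_clausePoly_eq_self_or_eq_zero {V : Finset σ} {α : σ → Bool}
    (h𝔛 : ∀ F ∈ 𝔛, Disjoint (cnfVars F) V) (hα : Respects V α S.Ecnf) :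
    ∀ C ∈ clausesOf S 𝔛, partialSubst V α (clausePoly 𝔽 C) = clausePoly 𝔽 C ∨
      partialSubst V α (clausePoly 𝔽 C) = 0 := by
  intro C hC
  by_cases hCV : (clauseVars C ∩ V).Nonempty
  · right
    have hCE : C ∈ S.Ecnf := by
      refine (mem_union.mp hC).resolve_left fun hC𝔛 => ?_
      obtain ⟨F, hF, hCF⟩ := mem_sup.mp hC𝔛
      obtain ⟨x, hx⟩ := hCV
      exact disjoint_left.mp (h𝔛 F hF) (mem_sup.mpr ⟨C, hCF, (mem_inter.mp hx).1⟩)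
        (mem_inter.mp hx).2
    obtain ⟨l, hl, hlV, hlα⟩ := hα C hCE hCV
    exact partialSubst_clausePoly_eq_zero hl hlV hlα
  · left
    exact partialSubst_clausePoly_eq_self α
      (disjoint_iff_inter_eq_empty.mpr (not_nonempty_iff_eq_empty.mp hCV))

theorem IsReduction.disjoint_vars (ord : AdmissibleOrder σ) {P R : MvPolynomial σ 𝔽}
    (hR : IsReduction ord (idealOf 𝔽 S 𝔛) P R) {V : Finset σ} {α : σ → Bool}
    (hα : Respects V α S.Ecnf) (h𝔛 : ∀ F ∈ 𝔛, Disjoint (cnfVars F) V)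
    (hP : Disjoint P.vars V) : Disjoint R.vars V := by
  have hI := isMLIdeal_idealOf (𝔽 := 𝔽) S 𝔛
  have hPdeg : P ∈ restrictDegree σ 𝔽 1 := by
    have := Submodule.add_mem _ (hI.mem_restrictDegree hR.2.1) (hR.1 ▸ mlin_mem_restrictDegree R)
    rwa [sub_add_cancel] at this
  have hPR' : P - mlin (partialSubst V α R) ∈ idealOf 𝔽 S 𝔛 := by
    have := mlin_partialSubst_mem_idealOf (partialSubst_clausePoly_eq_self_or_eq_zero h𝔛 hα) hR.2.1
    rwa [map_sub, mlin_sub, partialSubst_eq_self α hP, mlin_eq_self hPdeg] at this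
  have hRR' := hR.eq_of_sub_mem ord hI hPR' fun e' he' => by
    obtain ⟨e, he, hsub⟩ := exists_of_mem_support_mlin_partialSubst he'
    exact ⟨e, he, hsub.trans sdiff_subset⟩
  rw [← hRR', disjoint_left]
  intro x hx hxV
  obtain ⟨e', he', hxe'⟩ := (mem_vars_iff_mem_support x).mp hx
  obtain ⟨e, -, hsub⟩ := exists_of_mem_support_mlin_partialSubst he'
  exact (mem_sdiff.mp (hsub hxe')).2 hxV

end ClauseIdeal

theorem stmt7_general {𝔽 σ : Type} [Field 𝔽] [DecidableEq σ]
    (ord : AdmissibleOrder σ) (S : FVStructure σ)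
    (𝔛 : Finset (CNF σ))
    (a : 𝔽) (m : Finset σ) :
    nbrsP S (redOp ord (idealOf 𝔽 S 𝔛) (MvPolynomial.monomial (monoOf m) a))
      ⊆ nbrsF S 𝔛 ∪ nbrsM S m := by
  unfold redOp
  split_ifs with h
  swap
  · simp [nbrsP] -- no reduction exists, and `redOp` returns `0`
  intro V hV
  simp only [nbrsP, nbrsF, nbrsM, mem_union, mem_filter] at hV ⊢
  by_contra! hVout
  obtain ⟨α, hα⟩ := S.vfam_respects V hV.1
  have h𝔛 : ∀ F ∈ 𝔛, Disjoint (cnfVars F) V := fun F hF =>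
    disjoint_iff_inter_eq_empty.mpr (hVout.1 hV.1 F hF)
  have hP : Disjoint (monomial (monoOf m) a).vars V :=
    (disjoint_iff_inter_eq_empty.mpr (hVout.2 hV.1)).mono_left
      ((vars_monomial_subset _ a).trans (support_monoOf m).subset)
  exact not_disjoint_iff_nonempty_inter.mpr hV.2 (h.choose_spec.disjoint_vars ord hα h𝔛 hP)

/-- for any `𝔉* ⊆ 𝔉` and any term `T = a·∏_{x∈m} x`, the neighbourhood of
the reduction `R_{I(𝔉*∧E)}(T)` is contained in `N(𝔉*) ∪ N(T)`. -/
theorem stmt7 {𝔽 σ : Type} [Field 𝔽] [Fintype σ] [DecidableEq σ]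
    (ord : AdmissibleOrder σ) (S : FVStructure σ)
    (𝔛 : Finset (CNF σ)) (hsub : 𝔛 ⊆ S.fam)
    (a : 𝔽) (ha : a ≠ 0) (m : Finset σ) :
    nbrsP S (redOp ord (idealOf 𝔽 S 𝔛) (MvPolynomial.monomial (monoOf m) a))
      ⊆ nbrsF S 𝔛 ∪ nbrsM S m :=
  stmt7_general ord S 𝔛 a m
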